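/- Fix real numbers θ₀, x, y with 0 ≤ y ≤ x ≤ 1 and 0 ≤ θ₀ ≤ 1, and q with 2/3 ≤ q ≤ 1. For every Borel probability measure μ on the real line with μ([0,1]) = 1, we have q·∫(w1t(θ) − w1a(θ)) dμ(θ) + (1−q)·∫(w2t(θ) − w2a(θ)) dμ(θ) ≥ 0. (This establishes that for two bidders the granularity threshold for a two-item-demand attacker is at most 2/3: for q ≥ 2/3 no false-name attack of the form (1,x),(1,y) is beneficial in expectation for a 2-type bidder, for any per-item value distribution.) -/

import Mathlib

open MeasureTheory

/-- Truthful utility of a 2-type attacker of per-item value θ₀ against a 1-type adversary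
of value θ. -/
noncomputable def w1t (θ₀ θ : ℝ) : ℝ := if θ ≤ 2 * θ₀ then 2 * θ₀ - θ else 0

/-- Attack utility (bids (1,x),(1,y)) against a 1-type adversary of value θ. -/
noncomputable def w1a (θ₀ y θ : ℝ) : ℝ := if θ ≤ y then 2 * θ₀ - 2 * θ else -y

/-- Truthful utility against a 2-type adversary of per-item value θ. -/
noncomputable def w2t (θ₀ θ : ℝ) : ℝ := if θ ≤ θ₀ then 2 * θ₀ - 2 * θ else 0

/-- Attack utility (bids (1,x),(1,y)) against a 2-type adversary of per-item value θ. -/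
noncomputable def w2a (θ₀ x y θ : ℝ) : ℝ :=
  if θ ≤ y / 2 then 2 * θ₀
  else if θ ≤ x / 2 then 2 * θ₀ - 2 * θ + y
  else if θ ≤ (x + y) / 2 then 2 * θ₀ - 4 * θ + y + x
  else 0

/-! Pointwise on `θ ≥ 0`, both gains `g₁ = w1t - w1a` and `2 g₁ + g₂` (with `g₂ = w2t - w2a`) are
nonnegative, by inspecting the finitely many linear pieces. For `2/3 ≤ q ≤ 1` the integrand
`q g₁ + (1 - q) g₂ = (1 - q) (2 g₁ + g₂) + (3 q - 2) g₁` is a nonnegative combination of the two,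
so its integral against any measure concentrated on `[0, 1]` is nonnegative. -/

open Set

namespace MeasureTheory

variable {X E : Type*} [TopologicalSpace X] [MeasurableSpace X] [OpensMeasurableSpace X]
  [NormedAddCommGroup E] {μ : Measure X}

theorem Continuous.integrable_of_ae_mem_isCompact [IsFiniteMeasure μ] [T2Space X] {K : Set X}
    (hK : IsCompact K) (hμK : ∀ᵐ x ∂μ, x ∈ K) {f : X → E} (hf : Continuous f) :
    Integrable f μ := by
  rw [← Measure.restrict_eq_self_of_ae_mem hμK]
  exact hf.continuousOn.integrableOn_compact hK

theorem Integrable.ite_le [LinearOrder X] [OrderClosedTopology X] {f g : X → E} (c : X)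
    (hf : Integrable f μ) (hg : Integrable g μ) :
    Integrable (fun x => if x ≤ c then f x else g x) μ :=
  Integrable.piecewise (s := Iic c) measurableSet_Iic hf.integrableOn hg.integrableOn

end MeasureTheory

section Integrability

variable {μ : Measure ℝ} [IsFiniteMeasure μ] {K : Set ℝ}

theorem integrable_w1t (hK : IsCompact K) (hμK : ∀ᵐ θ ∂μ, θ ∈ K) (θ₀ : ℝ) :
    Integrable (w1t θ₀) μ := by
  have hc := fun (f : ℝ → ℝ) => Continuous.integrable_of_ae_mem_isCompact (f := f) hK hμK
  exact (hc _ (by fun_prop)).ite_le _ (hc _ (by fun_prop))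

theorem integrable_w1a (hK : IsCompact K) (hμK : ∀ᵐ θ ∂μ, θ ∈ K) (θ₀ y : ℝ) :
    Integrable (w1a θ₀ y) μ := by
  have hc := fun (f : ℝ → ℝ) => Continuous.integrable_of_ae_mem_isCompact (f := f) hK hμK
  exact (hc _ (by fun_prop)).ite_le _ (hc _ (by fun_prop))

theorem integrable_w2t (hK : IsCompact K) (hμK : ∀ᵐ θ ∂μ, θ ∈ K) (θ₀ : ℝ) :
    Integrable (w2t θ₀) μ := by
  have hc := fun (f : ℝ → ℝ) => Continuous.integrable_of_ae_mem_isCompact (f := f) hK hμK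
  exact (hc _ (by fun_prop)).ite_le _ (hc _ (by fun_prop))

theorem integrable_w2a (hK : IsCompact K) (hμK : ∀ᵐ θ ∂μ, θ ∈ K) (θ₀ x y : ℝ) :
    Integrable (w2a θ₀ x y) μ := by
  have hc := fun (f : ℝ → ℝ) => Continuous.integrable_of_ae_mem_isCompact (f := f) hK hμK
  exact (hc _ (by fun_prop)).ite_le _ <| (hc _ (by fun_prop)).ite_le _ <|
    (hc _ (by fun_prop)).ite_le _ (hc _ (by fun_prop))

end Integrability

section Gains

variable {θ₀ x y θ : ℝ}

theorem w1t_sub_w1a_nonneg (hy : 0 ≤ y) (hθ : 0 ≤ θ) : 0 ≤ w1t θ₀ θ - w1a θ₀ y θ := by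
  unfold w1t w1a
  split_ifs <;> linarith

theorem two_mul_w1t_sub_w1a_add_w2t_sub_w2a_nonneg (hy : 0 ≤ y) (hθ : 0 ≤ θ) :
    0 ≤ 2 * (w1t θ₀ θ - w1a θ₀ y θ) + (w2t θ₀ θ - w2a θ₀ x y θ) := by
  unfold w1t w1a w2t w2a
  split_ifs <;> linarith

theorem truthful_gain_mixture_nonneg {q : ℝ} (hy : 0 ≤ y) (hθ : 0 ≤ θ) (hq : 2 / 3 ≤ q)
    (hq1 : q ≤ 1) :
    0 ≤ q * (w1t θ₀ θ - w1a θ₀ y θ) + (1 - q) * (w2t θ₀ θ - w2a θ₀ x y θ) := by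
  have hg₁ := w1t_sub_w1a_nonneg (θ₀ := θ₀) hy hθ
  have hg₂ := two_mul_w1t_sub_w1a_add_w2t_sub_w2a_nonneg (θ₀ := θ₀) (x := x) hy hθ
  calc 0 ≤ (1 - q) * (2 * (w1t θ₀ θ - w1a θ₀ y θ) + (w2t θ₀ θ - w2a θ₀ x y θ))
          + (3 * q - 2) * (w1t θ₀ θ - w1a θ₀ y θ) :=
        add_nonneg (mul_nonneg (by linarith) hg₂) (mul_nonneg (by linarith) hg₁)
    _ = _ := by ring

end Gains

theorem stmt_2_general (θ₀ x y q : ℝ) (hy : 0 ≤ y) (hq : 2 / 3 ≤ q) (hq1 : q ≤ 1)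
    (μ : Measure ℝ) [IsProbabilityMeasure μ] (hμ : μ (Set.Icc 0 1) = 1) :
    q * (∫ θ, (w1t θ₀ θ - w1a θ₀ y θ) ∂μ)
      + (1 - q) * (∫ θ, (w2t θ₀ θ - w2a θ₀ x y θ) ∂μ) ≥ 0 := by
  have hae : ∀ᵐ θ ∂μ, θ ∈ Icc (0 : ℝ) 1 :=
    (ae_mem_iff_measure_eq measurableSet_Icc.nullMeasurableSet).2 (by rw [hμ, measure_univ])
  have hg₁ : Integrable (fun θ => w1t θ₀ θ - w1a θ₀ y θ) μ :=
    (integrable_w1t isCompact_Icc hae θ₀).sub (integrable_w1a isCompact_Icc hae θ₀ y)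
  have hg₂ : Integrable (fun θ => w2t θ₀ θ - w2a θ₀ x y θ) μ :=
    (integrable_w2t isCompact_Icc hae θ₀).sub (integrable_w2a isCompact_Icc hae θ₀ x y)
  rw [ge_iff_le, ← integral_const_mul, ← integral_const_mul,
    ← integral_add (hg₁.const_mul q) (hg₂.const_mul (1 - q))]
  exact integral_nonneg_of_ae <| hae.mono fun θ hθ => truthful_gain_mixture_nonneg hy hθ.1 hq hq1

theorem stmt_2 (θ₀ x y q : ℝ) (hy : 0 ≤ y) (hyx : y ≤ x) (hx : x ≤ 1)
    (hθ₀ : 0 ≤ θ₀) (hθ₀1 : θ₀ ≤ 1) (hq : 2 / 3 ≤ q) (hq1 : q ≤ 1)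
    (μ : Measure ℝ) [IsProbabilityMeasure μ] (hμ : μ (Set.Icc 0 1) = 1) :
    q * (∫ θ, (w1t θ₀ θ - w1a θ₀ y θ) ∂μ)
      + (1 - q) * (∫ θ, (w2t θ₀ θ - w2a θ₀ x y θ) ∂μ) ≥ 0 :=
  stmt_2_general θ₀ x y q hy hq hq1 μ hμ
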